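/- arXiv:2206.05830 — 3 statements merged into one kernel-verified Lean document; each statement's English description precedes it below -/
import Mathlib

section
/- Variance bound for the gradient sum over one CorgiPile shuffle (bound of I₄). Suppose N ≥ 2 and the block-variance assumption holds: (1/N)·Σ_{l=1}^N ‖(1/b)·Σ_{i∈B_l} ∇f_i(x) − ∇F(x)‖² ≤ h_D·σ²/b for all x. Then for every fixed x ∈ ℝ^d, E_ψ‖Σ_{k=1}^{nb} ∇f_{ψ(k)}(x) − (n/N)·m·∇F(x)‖² ≤ (n·b·(N−n)/(N−1))·h_D·σ², where the expectation is over a CorgiPile shuffle ψ. -/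
open Finset

noncomputable section

/-- Euclidean space `ℝ^d`. -/
abbrev Eu (d : ℕ) : Type := EuclideanSpace ℝ (Fin d)

/-- A CorgiPile shuffle: a set of `n` blocks (out of `N`) together with an injection
from the `n*b` positions onto the set of indices belonging to the chosen blocks. -/
def CorgiShuffle (N n b : ℕ) (blk : Fin (N * b) → Fin N) : Type :=
  { p : Finset (Fin N) × (Fin (n * b) → Fin (N * b)) //
      p.1.card = n ∧ Function.Injective p.2 ∧
      (∀ k, blk (p.2 k) ∈ p.1) ∧
      (∀ i, blk i ∈ p.1 → ∃ k, p.2 k = i) }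

noncomputable instance (N n b : ℕ) (blk : Fin (N * b) → Fin N) :
    Fintype (CorgiShuffle N n b blk) := by
  unfold CorgiShuffle; exact Fintype.ofFinite _

/-- The `l`-th block, as a finset of indices. -/
def blockSet {N b : ℕ} (blk : Fin (N * b) → Fin N) (l : Fin N) : Finset (Fin (N * b)) :=
  Finset.univ.filter (fun i => blk i = l)

/-- The average objective `F = (1/m) ∑ f i`, `m = N·b`. -/
def avgF {d m : ℕ} (f : Fin m → Eu d → ℝ) : Eu d → ℝ :=
  fun x => (∑ i, f i x) / m

/-!
Subtracting `(n/N)·m·∇F(x)` from the gradient sum of a shuffle leaves `∑_{l ∈ 𝓑} V_l`, where the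
block deviations `V_l = ∑_{i ∈ B_l} ∇f_i(x) - b·∇F(x)` sum to zero; so the expectation only sees the
uniformly drawn block set `𝓑`. Among the `n`-subsets of `N` indices, each index lies in
`C(N-1, n-1)` and each pair in `C(N-2, n-2)` of them, so expanding the square and using `∑ V_l = 0`
gives the finite-population formula `E‖∑_{l ∈ 𝓑} V_l‖² = n(N-n)/(N(N-1)) · ∑_l ‖V_l‖²`. The
block-variance assumption bounds `∑_l ‖V_l‖² ≤ N b h_D σ²`.
-/

section SamplingWithoutReplacement

variable {ι : Type*} [Fintype ι] [DecidableEq ι]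

theorem sum_filter_mem_sum_eq_sub_smul {M : Type*} [AddCommGroup M] {P : Finset (Finset ι)}
    {c₁ c₂ : ℕ} (h₁ : ∀ l, #{S ∈ P | l ∈ S} = c₁)
    (h₂ : ∀ l l', l ≠ l' → #{S ∈ P | l ∈ S ∧ l' ∈ S} = c₂)
    {v : ι → M} (hv : ∑ l, v l = 0) (l : ι) :
    ∑ S ∈ P with l ∈ S, ∑ l' ∈ S, v l' = c₁ • v l - c₂ • v l := by
  have hcompl : ∑ l' ∈ {l}ᶜ, v l' = -v l := by
    rw [eq_neg_iff_add_eq_zero, add_comm, ← hv, Fintype.sum_eq_add_sum_compl l]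
  calc ∑ S ∈ P with l ∈ S, ∑ l' ∈ S, v l'
      = ∑ l', #{S ∈ P | l ∈ S ∧ l' ∈ S} • v l' := by
        rw [sum_comm' (t' := univ) (s' := fun l' => {S ∈ P | l ∈ S ∧ l' ∈ S})
          (fun S l' => by simp [and_assoc])]
        simp only [sum_const]
    _ = c₁ • v l + c₂ • ∑ l' ∈ {l}ᶜ, v l' := by
        rw [Fintype.sum_eq_add_sum_compl l, smul_sum]
        congr 1
        · simp [h₁]
        · exact sum_congr rfl fun l' hl' => by
            rw [h₂ l l' (by simpa [eq_comm] using hl')]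
    _ = c₁ • v l - c₂ • v l := by rw [hcompl, smul_neg, sub_eq_add_neg]

theorem sum_norm_sum_sq_eq_of_card_filter {E : Type*} [NormedAddCommGroup E]
    [InnerProductSpace ℝ E] {P : Finset (Finset ι)} {c₁ c₂ : ℕ}
    (h₁ : ∀ l, #{S ∈ P | l ∈ S} = c₁)
    (h₂ : ∀ l l', l ≠ l' → #{S ∈ P | l ∈ S ∧ l' ∈ S} = c₂)
    {v : ι → E} (hv : ∑ l, v l = 0) :
    ∑ S ∈ P, ‖∑ l ∈ S, v l‖ ^ 2 = ((c₁ : ℝ) - c₂) * ∑ l, ‖v l‖ ^ 2 := by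
  calc ∑ S ∈ P, ‖∑ l ∈ S, v l‖ ^ 2
      = ∑ S ∈ P, ∑ l ∈ S, inner ℝ (v l) (∑ l' ∈ S, v l') := by
        simp only [← real_inner_self_eq_norm_sq, sum_inner]
    _ = ∑ l, inner ℝ (v l) (∑ S ∈ P with l ∈ S, ∑ l' ∈ S, v l') := by
        rw [sum_comm' (t' := univ) (s' := fun l => {S ∈ P | l ∈ S})
          (fun S l => by simp [and_comm])]
        simp only [inner_sum]
    _ = ((c₁ : ℝ) - c₂) * ∑ l, ‖v l‖ ^ 2 := by
        rw [mul_sum]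
        refine sum_congr rfl fun l _ => ?_
        rw [sum_filter_mem_sum_eq_sub_smul h₁ h₂ hv, ← Nat.cast_smul_eq_nsmul ℝ,
          ← Nat.cast_smul_eq_nsmul ℝ, ← sub_smul, real_inner_smul_right, real_inner_self_eq_norm_sq]

theorem card_filter_powersetCard_univ_mem (k : ℕ) (l : ι) :
    #{S ∈ powersetCard (k + 1) univ | l ∈ S} = (Fintype.card ι - 1).choose k := by
  simpa using card_filter_powersetCard_subset {l} univ (k + 1) (subset_univ _) (by simp)

theorem card_filter_powersetCard_univ_mem_mem (k : ℕ) {l l' : ι} (h : l ≠ l') :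
    #{S ∈ powersetCard (k + 2) univ | l ∈ S ∧ l' ∈ S} = (Fintype.card ι - 2).choose k := by
  simpa [card_pair h, insert_subset_iff] using
    card_filter_powersetCard_subset {l, l'} univ (k + 2) (subset_univ _) (by simp [card_pair h])

theorem card_filter_powersetCard_one_univ_mem_mem {l l' : ι} (h : l ≠ l') :
    #{S ∈ powersetCard 1 univ | l ∈ S ∧ l' ∈ S} = 0 := by
  simp only [card_eq_zero, filter_eq_empty_iff, mem_powersetCard_univ, card_eq_one]
  rintro S ⟨a, rfl⟩ ⟨hl, hl'⟩
  exact h ((mem_singleton.1 hl).trans (mem_singleton.1 hl').symm)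

theorem sum_powersetCard_norm_sum_sq {E : Type*} [NormedAddCommGroup E]
    [InnerProductSpace ℝ E] (hι : 2 ≤ Fintype.card ι) {n : ℕ} (hn : 1 ≤ n)
    {v : ι → E} (hv : ∑ l, v l = 0) :
    ∑ S ∈ powersetCard n univ, ‖∑ l ∈ S, v l‖ ^ 2
      = (Fintype.card ι - 2).choose (n - 1) * ∑ l, ‖v l‖ ^ 2 := by
  obtain ⟨k, rfl⟩ : ∃ k, n = k + 1 := ⟨n - 1, by omega⟩
  rcases k with _ | k
  · rw [sum_norm_sum_sq_eq_of_card_filter (card_filter_powersetCard_univ_mem 0)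
      (fun _ _ => card_filter_powersetCard_one_univ_mem_mem) hv]
    simp
  · rw [sum_norm_sum_sq_eq_of_card_filter (card_filter_powersetCard_univ_mem (k + 1))
      (fun _ _ => card_filter_powersetCard_univ_mem_mem k) hv]
    obtain ⟨N, hN⟩ : ∃ N, Fintype.card ι = N + 2 := ⟨Fintype.card ι - 2, by omega⟩
    simp [hN, Nat.choose_succ_succ']

theorem choose_sub_two_mul_eq {N n : ℕ} (hN : 2 ≤ N) (hn : 1 ≤ n) :
    (N - 2).choose (n - 1) * (N * (N - 1)) = N.choose n * (n * (N - n)) := by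
  obtain ⟨M, rfl⟩ : ∃ M, N = M + 2 := ⟨N - 2, by omega⟩
  obtain ⟨k, rfl⟩ : ∃ k, n = k + 1 := ⟨n - 1, by omega⟩
  have h₁ := Nat.choose_mul_succ_eq M k
  have h₂ := Nat.add_one_mul_choose_eq (M + 1) k
  simp only [Nat.add_sub_cancel, show M + 2 - 1 = M + 1 by omega,
    show M + 2 - (k + 1) = M + 1 - k by omega]
  calc M.choose k * ((M + 2) * (M + 1)) = (M + 2) * (M.choose k * (M + 1)) := by ring
    _ = (M + 2) * (M + 1).choose k * (M + 1 - k) := by rw [h₁, mul_assoc]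
    _ = (M + 2).choose (k + 1) * ((k + 1) * (M + 1 - k)) := by rw [h₂, mul_assoc]

theorem sum_powersetCard_norm_sum_sq_div_choose {E : Type*} [NormedAddCommGroup E]
    [InnerProductSpace ℝ E] (hι : 2 ≤ Fintype.card ι) {n : ℕ}
    (hn : 1 ≤ n) (hnι : n ≤ Fintype.card ι) {v : ι → E} (hv : ∑ l, v l = 0) :
    (∑ S ∈ powersetCard n univ, ‖∑ l ∈ S, v l‖ ^ 2) / (Fintype.card ι).choose n
      = n * (Fintype.card ι - n) / (Fintype.card ι * (Fintype.card ι - 1)) * ∑ l, ‖v l‖ ^ 2 := by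
  rw [sum_powersetCard_norm_sum_sq hι hn hv]
  set N := Fintype.card ι
  have hchoose := congrArg (Nat.cast : ℕ → ℝ) (choose_sub_two_mul_eq hι hn)
  push_cast [Nat.cast_sub (by omega : 1 ≤ N), Nat.cast_sub hnι] at hchoose
  have hN : (N : ℝ) - 1 ≠ 0 := by
    have : (2 : ℝ) ≤ N := by exact_mod_cast hι
    linarith
  have hNn : (N.choose n : ℝ) ≠ 0 := by exact_mod_cast (Nat.choose_pos hnι).ne'
  field_simp
  linear_combination (∑ l, ‖v l‖ ^ 2) * hchoose

end SamplingWithoutReplacement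

namespace CorgiShuffle

variable {N n b : ℕ} {blk : Fin (N * b) → Fin N}

theorem image_eq (ω : CorgiShuffle N n b blk) :
    univ.image ω.val.2 = ({i | blk i ∈ ω.val.1} : Finset _) := by
  ext i
  simp only [mem_image, mem_univ, true_and, mem_filter]
  exact ⟨fun ⟨k, hk⟩ => hk ▸ ω.2.2.2.1 k, ω.2.2.2.2 i⟩

theorem sum_comp_eq_sum_blockSet {M : Type*} [AddCommMonoid M] (ω : CorgiShuffle N n b blk)
    (g : Fin (N * b) → M) :
    ∑ k, g (ω.val.2 k) = ∑ l ∈ ω.val.1, ∑ i ∈ blockSet blk l, g i := by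
  rw [← sum_image ω.2.2.1.injOn, image_eq, ← sum_fiberwise_eq_sum_filter]
  rfl

theorem sum_comp_sub_smul_eq_sum_blockSet {E : Type*} [AddCommGroup E] [Module ℝ E] (hN : N ≠ 0)
    (ω : CorgiShuffle N n b blk) (g : Fin (N * b) → E) (G : E) :
    ∑ k, g (ω.val.2 k) - ((n / N : ℝ) * (N * b : ℕ)) • G
      = ∑ l ∈ ω.val.1, (∑ i ∈ blockSet blk l, g i - (b : ℝ) • G) := by
  rw [sum_comp_eq_sum_blockSet, sum_sub_distrib, sum_const, ω.2.1, ← Nat.cast_smul_eq_nsmul ℝ,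
    smul_smul]
  congr 2
  push_cast
  field_simp

def equivSigma (N n b : ℕ) (blk : Fin (N * b) → Fin N) :
    CorgiShuffle N n b blk ≃
      Σ S : powersetCard n (univ : Finset (Fin N)), Fin (n * b) ≃ {i // blk i ∈ S.val} where
  toFun ω := ⟨⟨ω.1.1, mem_powersetCard_univ.2 ω.2.1⟩,
    Equiv.ofBijective (fun k => ⟨ω.1.2 k, ω.2.2.2.1 k⟩)
      ⟨fun _ _ h => ω.2.2.1 (congrArg Subtype.val h),
       fun i => (ω.2.2.2.2 i.1 i.2).imp fun _ hk => Subtype.ext hk⟩⟩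
  invFun σ := ⟨(σ.1.1, fun k => (σ.2 k).1),
    mem_powersetCard_univ.1 σ.1.2,
    fun _ _ h => σ.2.injective (Subtype.ext h),
    fun k => (σ.2 k).2,
    fun i hi => ⟨σ.2.symm ⟨i, hi⟩, by simp⟩⟩
  left_inv _ := rfl
  right_inv σ := Sigma.ext rfl (heq_of_eq (Equiv.ext fun _ => Subtype.ext rfl))

theorem card_subtype_blk_mem (hblk : ∀ l, #(blockSet blk l) = b) (S : Finset (Fin N)) :
    Fintype.card {i // blk i ∈ S} = #S * b := by
  rw [Fintype.card_subtype, ← sum_card_fiberwise_eq_card_filter]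
  exact sum_const_nat fun l _ => hblk l

theorem sum_comp_fst {M : Type*} [AddCommMonoid M] (hblk : ∀ l, #(blockSet blk l) = b)
    (h : Finset (Fin N) → M) :
    ∑ ω : CorgiShuffle N n b blk, h ω.val.1 = (n * b).factorial • ∑ S ∈ powersetCard n univ, h S := by
  rw [← (equivSigma N n b blk).symm.sum_comp, Fintype.sum_sigma,
    ← sum_coe_sort (powersetCard n univ) h, smul_sum]
  refine sum_congr rfl fun S _ => ?_
  change ∑ _ : Fin (n * b) ≃ {i // blk i ∈ S.val}, h S.val = _
  rw [sum_const, card_univ, Fintype.card_equiv (Fintype.equivOfCardEq ?_), Fintype.card_fin]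
  rw [Fintype.card_fin, card_subtype_blk_mem hblk, mem_powersetCard_univ.1 S.2]

theorem sum_comp_fst_div_card (hblk : ∀ l, #(blockSet blk l) = b) (h : Finset (Fin N) → ℝ) :
    (∑ ω : CorgiShuffle N n b blk, h ω.val.1) / Fintype.card (CorgiShuffle N n b blk)
      = (∑ S ∈ powersetCard n univ, h S) / N.choose n := by
  have hcard : Fintype.card (CorgiShuffle N n b blk) = (n * b).factorial * N.choose n := by
    simpa [← Fintype.card_eq_sum_ones] using sum_comp_fst (n := n) (M := ℕ) hblk (fun _ => 1)
  rw [sum_comp_fst hblk, hcard, nsmul_eq_mul]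
  push_cast
  exact mul_div_mul_left _ _ (by positivity)

end CorgiShuffle

theorem gradient_avgF {d m : ℕ} {f : Fin m → Eu d → ℝ} (hf : ∀ i, Differentiable ℝ (f i))
    (x : Eu d) : gradient (avgF f) x = (m : ℝ)⁻¹ • ∑ i, gradient (f i) x := by
  have hsum : DifferentiableAt ℝ (fun y => ∑ i, f i y) x :=
    DifferentiableAt.fun_sum fun i _ => hf i x
  have havg : avgF f = fun y => (m : ℝ)⁻¹ * ∑ i, f i y := by
    funext y
    rw [avgF, div_eq_inv_mul]
  rw [havg, gradient, fderiv_const_mul hsum, fderiv_fun_sum fun i _ => hf i x, map_smul, map_sum]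
  rfl

theorem sum_sum_blockSet_sub_smul_eq_zero {E : Type*} [AddCommGroup E] [Module ℝ E] {N b : ℕ}
    (blk : Fin (N * b) → Fin N) (g : Fin (N * b) → E) :
    ∑ l, (∑ i ∈ blockSet blk l, g i - (b : ℝ) • ((N * b : ℕ) : ℝ)⁻¹ • ∑ i, g i) = 0 := by
  have hblocks : ∑ l, ∑ i ∈ blockSet blk l, g i = ∑ i, g i := sum_fiberwise univ blk g
  rw [sum_sub_distrib, hblocks, sum_const, card_univ, Fintype.card_fin,
    ← Nat.cast_smul_eq_nsmul ℝ, smul_smul, smul_smul, sub_eq_zero]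
  rcases eq_or_ne (N * b) 0 with hNb | hNb
  · have huniv : (univ : Finset (Fin (N * b))) = ∅ := card_eq_zero.1 (by simp [hNb])
    simp [huniv]
  · rw [← Nat.cast_mul, mul_inv_cancel₀ (by exact_mod_cast hNb), one_smul]

theorem sum_norm_sub_smul_sq_le {E : Type*} [NormedAddCommGroup E] [NormedSpace ℝ E] {N : ℕ}
    (hN : 0 < N) {w : Fin N → E} {G : E} {b C : ℝ} (hb : 0 < b)
    (h : (∑ l, ‖b⁻¹ • w l - G‖ ^ 2) / N ≤ C / b) :
    ∑ l, ‖w l - b • G‖ ^ 2 ≤ N * b * C := by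
  have hscale : ∀ l, ‖w l - b • G‖ ^ 2 = b ^ 2 * ‖b⁻¹ • w l - G‖ ^ 2 := fun l => by
    rw [← abs_of_pos hb, ← Real.norm_eq_abs, ← mul_pow, ← norm_smul, smul_sub, smul_smul,
      Real.norm_eq_abs, abs_of_pos hb, mul_inv_cancel₀ hb.ne', one_smul]
  rw [div_le_div_iff₀ (by exact_mod_cast hN) hb] at h
  simp only [hscale, ← mul_sum]
  nlinarith

theorem variance_bound_gradient_sum_corgi_shuffle_general {d N n b : ℕ}
    (hN : 2 ≤ N) (hn1 : 1 ≤ n) (hnN : n ≤ N)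
    (blk : Fin (N * b) → Fin N)
    (hblk : ∀ l, (blockSet blk l).card = b)
    (f : Fin (N * b) → Eu d → ℝ)
    (hdiff : ∀ i, Differentiable ℝ (f i))
    (hD sig : ℝ)
    (hblockvar : ∀ x : Eu d,
      (∑ l, ‖((b : ℝ))⁻¹ • (∑ i ∈ blockSet blk l, gradient (f i) x)
          - gradient (avgF f) x‖ ^ 2) / (N : ℝ) ≤ hD * sig ^ 2 / (b : ℝ))
    (x : Eu d) :
    (∑ ω : CorgiShuffle N n b blk,
        ‖(∑ k : Fin (n * b), gradient (f (ω.val.2 k)) x)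
          - (((n : ℝ) / (N : ℝ)) * ((N * b : ℕ) : ℝ)) • gradient (avgF f) x‖ ^ 2) /
      (Fintype.card (CorgiShuffle N n b blk) : ℝ)
      ≤ ((n : ℝ) * (b : ℝ) * ((N : ℝ) - (n : ℝ)) / ((N : ℝ) - 1)) * hD * sig ^ 2 := by
  set G := gradient (avgF f) x
  set V : Fin N → Eu d := fun l => ∑ i ∈ blockSet blk l, gradient (f i) x - (b : ℝ) • G
  have hV : ∑ l, V l = 0 := by
    simpa only [V, G, gradient_avgF hdiff x] using
      sum_sum_blockSet_sub_smul_eq_zero blk fun i => gradient (f i) x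
  have hT : ∑ l, ‖V l‖ ^ 2 ≤ N * b * (hD * sig ^ 2) := by
    rcases (Nat.zero_le b).eq_or_lt with rfl | hb
    · simp [V, card_eq_zero.1 (hblk _)]
    · exact sum_norm_sub_smul_sq_le (by omega) (Nat.cast_pos.2 hb) (hblockvar x)
  simp only [fun ω => CorgiShuffle.sum_comp_sub_smul_eq_sum_blockSet (by omega) ω
    (fun i => gradient (f i) x) G]
  have hsample := sum_powersetCard_norm_sum_sq_div_choose (by simpa) hn1 (by simpa) hV
  rw [Fintype.card_fin] at hsample
  rw [CorgiShuffle.sum_comp_fst_div_card hblk fun S => ‖∑ l ∈ S, V l‖ ^ 2, hsample]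
  have hN1 : (0 : ℝ) < N - 1 := by
    have : (2 : ℝ) ≤ N := by exact_mod_cast hN
    linarith
  have hNn : (0 : ℝ) ≤ N - n := sub_nonneg.2 (by exact_mod_cast hnN)
  calc (n * (N - n) / (N * (N - 1)) : ℝ) * ∑ l, ‖V l‖ ^ 2
      ≤ n * (N - n) / (N * (N - 1)) * (N * b * (hD * sig ^ 2)) := by gcongr
    _ = n * b * (N - n) / (N - 1) * hD * sig ^ 2 := by
      field_simp

/-- **Variance bound for the gradient sum over one CorgiPile shuffle (bound of I₄).**
Under the block-variance assumption (e), for every fixed `x`,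
`E_ψ‖∑_{k=1}^{nb} ∇f_{ψ(k)}(x) − (n/N)·m·∇F(x)‖² ≤ (n·b·(N−n)/(N−1))·h_D·σ²`. -/
theorem variance_bound_gradient_sum_corgi_shuffle {d N n b : ℕ}
    (hN : 2 ≤ N) (hn1 : 1 ≤ n) (hnN : n ≤ N)
    (blk : Fin (N * b) → Fin N)
    (hblk : ∀ l, (blockSet blk l).card = b)
    (f : Fin (N * b) → Eu d → ℝ)
    (hdiff : ∀ i, Differentiable ℝ (f i))
    (hD sig : ℝ) (hhD : 0 ≤ hD) (hsig : 0 ≤ sig)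
    (hblockvar : ∀ x : Eu d,
      (∑ l, ‖((b : ℝ))⁻¹ • (∑ i ∈ blockSet blk l, gradient (f i) x)
          - gradient (avgF f) x‖ ^ 2) / (N : ℝ) ≤ hD * sig ^ 2 / (b : ℝ))
    (x : Eu d) :
    (∑ ω : CorgiShuffle N n b blk,
        ‖(∑ k : Fin (n * b), gradient (f (ω.val.2 k)) x)
          - (((n : ℝ) / (N : ℝ)) * ((N * b : ℕ) : ℝ)) • gradient (avgF f) x‖ ^ 2) /
      (Fintype.card (CorgiShuffle N n b blk) : ℝ)
      ≤ ((n : ℝ) * (b : ℝ) * ((N : ℝ) - (n : ℝ)) / ((N : ℝ) - 1)) * hD * sig ^ 2 :=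
  variance_bound_gradient_sum_corgi_shuffle_general hN hn1 hnN blk hblk f hdiff hD sig hblockvar x
end
end

section
/- Deterministic drift bound for within-epoch SGD iterates (bound of I₃). Let f_1,…,f_m : ℝ^d → ℝ be differentiable with each ∇f_i L-Lipschitz and ‖∇f_i(x)‖ ≤ G for all x. Let K ≥ 1, η > 0, let σ : {1,…,K} → {1,…,m} be any index sequence, and define iterates x_0 ∈ ℝ^d arbitrary and x_k = x_{k−1} − η·∇f_{σ(k)}(x_{k−1}) for k = 1,…,K. Then ‖Σ_{k=1}^K [∇f_{σ(k)}(x_{k−1}) − ∇f_{σ(k)}(x_0)]‖² ≤ (1/3)·η²·L²·G²·K⁴. -/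
open Finset

noncomputable section

/-- Within-epoch SGD iterates `x_{k+1} = x_k − η·∇f_{σ(k)}(x_k)` along an index sequence `σ`. -/
def sgdSeq {d m : ℕ} (f : Fin m → Eu d → ℝ) (η : ℝ) (σ : ℕ → Fin m) (x0 : Eu d) : ℕ → Eu d
  | 0 => x0
  | k + 1 => sgdSeq f η σ x0 k - η • gradient (f (σ k)) (sgdSeq f η σ x0 k)


lemma gauss_sum_real (K : ℕ) : ∑ k ∈ Finset.range K, (k : ℝ) = K * (K - 1) / 2 := by
  induction K with
  | zero => simp
  | succ n ih => rw [Finset.sum_range_succ, ih]; push_cast; ring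

lemma sgdSeq_dist {d m : ℕ} (f : Fin m → Eu d → ℝ) (G η : ℝ) (hη : 0 ≤ η)
    (σ : ℕ → Fin m) (x0 : Eu d) (hG : ∀ i (x : Eu d), ‖gradient (f i) x‖ ≤ G) :
    ∀ k : ℕ, ‖sgdSeq f η σ x0 k - x0‖ ≤ η * G * k := by
  intro k
  induction k with
  | zero => simp [sgdSeq]
  | succ k ih =>
    have hGnn : 0 ≤ G := le_trans (norm_nonneg _) (hG (σ 0) x0)
    have : sgdSeq f η σ x0 (k+1) - x0
        = (sgdSeq f η σ x0 k - x0) - η • gradient (f (σ k)) (sgdSeq f η σ x0 k) := by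
      simp [sgdSeq]; abel
    rw [this]
    calc ‖(sgdSeq f η σ x0 k - x0) - η • gradient (f (σ k)) (sgdSeq f η σ x0 k)‖
        ≤ ‖sgdSeq f η σ x0 k - x0‖ + ‖η • gradient (f (σ k)) (sgdSeq f η σ x0 k)‖ :=
          norm_sub_le _ _
      _ ≤ η * G * k + η * G := by
          gcongr
          rw [norm_smul, Real.norm_eq_abs, abs_of_nonneg hη]
          exact mul_le_mul_of_nonneg_left (hG _ _) hη
      _ = η * G * (k + 1 : ℕ) := by push_cast; ring

/-- **Deterministic drift bound for within-epoch SGD iterates (bound of I₃).**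
`‖∑_{k=1}^K [∇f_{σ(k)}(x_{k−1}) − ∇f_{σ(k)}(x_0)]‖² ≤ (1/3)·η²·L²·G²·K⁴`. -/
theorem drift_bound_within_epoch {d m : ℕ}
    (f : Fin m → Eu d → ℝ) (L G : ℝ)
    (hdiff : ∀ i, Differentiable ℝ (f i))
    (hLip : ∀ i (x y : Eu d), ‖gradient (f i) x - gradient (f i) y‖ ≤ L * ‖x - y‖)
    (hG : ∀ i (x : Eu d), ‖gradient (f i) x‖ ≤ G)
    (K : ℕ) (hK : 1 ≤ K) (η : ℝ) (hη : 0 < η) (σ : ℕ → Fin m) (x0 : Eu d) :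
    ‖∑ k ∈ Finset.range K,
        (gradient (f (σ k)) (sgdSeq f η σ x0 k) - gradient (f (σ k)) x0)‖ ^ 2
      ≤ (1 / 3) * η ^ 2 * L ^ 2 * G ^ 2 * (K : ℝ) ^ 4 := by
  have hGnn : 0 ≤ G := le_trans (norm_nonneg _) (hG (σ 0) x0)
  have hterm : ∀ k ∈ Finset.range K,
      ‖gradient (f (σ k)) (sgdSeq f η σ x0 k) - gradient (f (σ k)) x0‖
        ≤ |L| * (η * G * k) := by
    intro k _
    calc ‖gradient (f (σ k)) (sgdSeq f η σ x0 k) - gradient (f (σ k)) x0‖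
        ≤ L * ‖sgdSeq f η σ x0 k - x0‖ := hLip _ _ _
      _ ≤ |L| * ‖sgdSeq f η σ x0 k - x0‖ := by
          exact mul_le_mul_of_nonneg_right (le_abs_self L) (norm_nonneg _)
      _ ≤ |L| * (η * G * k) := by
          exact mul_le_mul_of_nonneg_left
            (sgdSeq_dist f G η hη.le σ x0 hG k) (abs_nonneg L)
  have hsum : ‖∑ k ∈ Finset.range K,
      (gradient (f (σ k)) (sgdSeq f η σ x0 k) - gradient (f (σ k)) x0)‖
      ≤ ∑ k ∈ Finset.range K, |L| * (η * G * k) :=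
    (norm_sum_le _ _).trans (Finset.sum_le_sum hterm)
  have hS : ∑ k ∈ Finset.range K, |L| * (η * G * (k:ℝ))
      = |L| * η * G * (K * (K-1) / 2) := by
    rw [← Finset.mul_sum, ← Finset.mul_sum, gauss_sum_real]; ring
  rw [hS] at hsum
  have hKnn : (0:ℝ) ≤ K := Nat.cast_nonneg K
  have hK1 : (1:ℝ) ≤ K := by exact_mod_cast hK
  have h1 : ‖∑ k ∈ Finset.range K,
      (gradient (f (σ k)) (sgdSeq f η σ x0 k) - gradient (f (σ k)) x0)‖ ^ 2
      ≤ (|L| * η * G * (K * (K-1) / 2)) ^ 2 := by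
    exact pow_le_pow_left₀ (norm_nonneg _) hsum 2
  refine h1.trans ?_
  have habs : |L|^2 = L^2 := sq_abs L
  have hrw : (|L| * η * G * ((K:ℝ) * ((K:ℝ)-1) / 2))^2
      = η^2 * L^2 * G^2 * ((K:ℝ)^2 * ((K:ℝ)-1)^2) / 4 := by
    rw [← sq_abs L]; ring
  rw [hrw] at h1
  have h2 : ((K:ℝ)-1)^2 ≤ (K:ℝ)^2 := by nlinarith
  have hP : (0:ℝ) ≤ η^2 * L^2 * G^2 * (K:ℝ)^2 := by positivity
  have h3 := mul_le_mul_of_nonneg_left h2 hP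
  nlinarith [h3]


end
end

section
/- Centered bilinear block-sum bound (the ρ-trick bound of J₃). Let N ≥ 2, 1 ≤ n ≤ N, and suppose x* ∈ ℝ^d satisfies Σ_{j=1}^m ∇f_j(x*) = 0 (e.g., x* is a stationary point of F). Suppose the Hessians satisfy ‖H_i(x*)‖ ≤ L in operator norm for all i, and ‖∇f_j(x*)‖ ≤ G for all j. Then ‖Σ_{l=1}^N Σ_{i≠j, i,j∈B_l} H_i(x*)·∇f_j(x*) + ((n−1)/(N−1))·Σ_{l≠l'} Σ_{i∈B_l, j∈B_{l'}} H_i(x*)·∇f_j(x*)‖ ≤ ((N−n)/(N−1))·N·b·(b−1)·L·G + ((n−1)/(N−1))·N·b·L·G. -/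
open Finset

noncomputable section

/-! Because `∑ⱼ ∇fⱼ(x*) = 0`, the sum of `Hᵢ(x*) ∇fⱼ(x*)` over all pairs `(i, j)` vanishes, so the
cross-block sum `S` is minus the within-block sum, i.e. `S = -(T + D)` with `T` the off-diagonal
within-block part and `D = ∑ᵢ Hᵢ(x*) ∇fᵢ(x*)`. Hence `T + ρ S = (1 - ρ) T - ρ D`, and for
`ρ = (n - 1)/(N - 1) ∈ [0, 1]` the termwise bounds `‖T‖ ≤ N b (b - 1) L G`, `‖D‖ ≤ N b L G`
give the claim. -/

lemma Finset.sum_ite_eq_zero_eq_sum_erase {ι M : Type*} [DecidableEq ι] [AddCommMonoid M]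
    (s : Finset ι) (i : ι) (w : ι → M) :
    ∑ j ∈ s, (if i = j then 0 else w j) = ∑ j ∈ s.erase i, w j := by
  rw [← sum_erase s (f := fun j => if i = j then 0 else w j) (if_pos rfl)]
  exact sum_congr rfl fun j hj => if_neg (ne_of_mem_erase hj).symm

section BlockSums

variable {ι κ E : Type*} [Fintype ι] [Fintype κ] [DecidableEq κ] (blk : ι → κ)

def intraBlockSum [DecidableEq ι] [AddCommMonoid E] (v : ι → ι → E) : E :=
  ∑ l, ∑ i with blk i = l, ∑ j with blk j = l, if i = j then 0 else v i j

def crossBlockSum [AddCommMonoid E] (v : ι → ι → E) : E :=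
  ∑ p ∈ univ.offDiag, ∑ i with blk i = p.1, ∑ j with blk j = p.2, v i j

lemma sum_blockPairs_eq_sum [AddCommMonoid E] (v : ι → ι → E) :
    ∑ p : κ × κ, ∑ i with blk i = p.1, ∑ j with blk j = p.2, v i j = ∑ i, ∑ j, v i j := by
  simp only [Fintype.sum_prod_type]
  refine (sum_congr rfl fun l _ => ?_).trans (sum_fiberwise univ blk fun i => ∑ j, v i j)
  rw [sum_comm (s := (univ : Finset κ))]
  exact sum_congr rfl fun i _ => sum_fiberwise univ blk (v i)

lemma sum_sameBlock_eq_intraBlockSum_add_diag [DecidableEq ι] [AddCommMonoid E]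
    (v : ι → ι → E) :
    ∑ l, ∑ i with blk i = l, ∑ j with blk j = l, v i j = intraBlockSum blk v + ∑ i, v i i := by
  rw [intraBlockSum, ← sum_fiberwise univ blk (fun i => v i i), ← sum_add_distrib]
  refine sum_congr rfl fun l _ => ?_
  rw [← sum_add_distrib]
  refine sum_congr rfl fun i hi => ?_
  rw [sum_ite_eq_zero_eq_sum_erase, add_comm, add_sum_erase _ _ hi]

lemma crossBlockSum_eq_neg [DecidableEq ι] [AddCommGroup E] {v : ι → ι → E}
    (hv : ∀ i, ∑ j, v i j = 0) :
    crossBlockSum blk v = -(intraBlockSum blk v + ∑ i, v i i) := by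
  have htotal := sum_blockPairs_eq_sum blk v
  rw [← univ_product_univ, ← diag_union_offDiag, sum_union (disjoint_diag_offDiag _), sum_diag,
    sum_sameBlock_eq_intraBlockSum_add_diag] at htotal
  simp only [hv, sum_const_zero] at htotal
  rw [crossBlockSum, eq_neg_iff_add_eq_zero, add_comm, htotal]

lemma norm_intraBlockSum_le [DecidableEq ι] [SeminormedAddCommGroup E] {v : ι → ι → E}
    {b : ℕ} {C : ℝ} (hcard : ∀ l, #{i | blk i = l} = b) (hv : ∀ i j, ‖v i j‖ ≤ C) :
    ‖intraBlockSum blk v‖ ≤ Fintype.card κ * b * (b - 1) * C := by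
  have hrow : ∀ l, ∀ i ∈ ({i | blk i = l} : Finset ι),
      ‖∑ j with blk j = l, if i = j then 0 else v i j‖ ≤ (b - 1) * C := by
    intro l i hi
    have hcard_erase : (#(({i | blk i = l} : Finset ι).erase i) : ℝ) = b - 1 := by
      rw [← hcard l, ← card_erase_add_one hi]
      push_cast
      ring
    rw [sum_ite_eq_zero_eq_sum_erase]
    calc _ ≤ ∑ j ∈ ({i | blk i = l} : Finset ι).erase i, C := norm_sum_le_of_le _ fun j _ => hv i j
      _ = (b - 1) * C := by rw [sum_const, nsmul_eq_mul, hcard_erase]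
  calc ‖intraBlockSum blk v‖
      ≤ ∑ l, ∑ i with blk i = l, ((b : ℝ) - 1) * C :=
        norm_sum_le_of_le _ fun l _ => norm_sum_le_of_le _ (hrow l)
    _ = Fintype.card κ * b * (b - 1) * C := by
        simp only [sum_const, hcard, card_univ, nsmul_eq_mul]
        ring

theorem norm_intraBlockSum_add_smul_crossBlockSum_le [DecidableEq ι] [SeminormedAddCommGroup E]
    [NormedSpace ℝ E] {v : ι → ι → E} {b : ℕ} {C ρ : ℝ} (hrow : ∀ i, ∑ j, v i j = 0)
    (hcard : ∀ l, #{i | blk i = l} = b) (hv : ∀ i j, ‖v i j‖ ≤ C) (hρ0 : 0 ≤ ρ) (hρ1 : ρ ≤ 1) :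
    ‖intraBlockSum blk v + ρ • crossBlockSum blk v‖
      ≤ (1 - ρ) * (Fintype.card κ * b * (b - 1) * C) + ρ * (Fintype.card ι * C) := by
  have hdiag : ‖∑ i, v i i‖ ≤ Fintype.card ι * C := by
    simpa using norm_sum_le_of_le univ fun i _ => hv i i
  calc ‖intraBlockSum blk v + ρ • crossBlockSum blk v‖
      = ‖(1 - ρ) • intraBlockSum blk v - ρ • ∑ i, v i i‖ := by
        rw [crossBlockSum_eq_neg blk hrow]
        congr 1
        module
    _ ≤ (1 - ρ) * ‖intraBlockSum blk v‖ + ρ * ‖∑ i, v i i‖ := by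
        refine (norm_sub_le _ _).trans_eq ?_
        rw [norm_smul_of_nonneg (sub_nonneg.2 hρ1), norm_smul_of_nonneg hρ0]
    _ ≤ _ := by
        gcongr
        exact norm_intraBlockSum_le blk hcard hv

end BlockSums

theorem rho_trick_block_sum_bound_general {d N n b : ℕ}
    (hN : 2 ≤ N) (hn1 : 1 ≤ n) (hnN : n ≤ N)
    (blk : Fin (N * b) → Fin N)
    (hblk : ∀ l, (blockSet blk l).card = b)
    (f : Fin (N * b) → Eu d → ℝ) (L G : ℝ)
    (xstar : Eu d)
    (hstat : ∑ j, gradient (f j) xstar = 0)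
    (hL : ∀ i, ‖fderiv ℝ (gradient (f i)) xstar‖ ≤ L)
    (hG : ∀ j, ‖gradient (f j) xstar‖ ≤ G) :
    ‖(∑ l, ∑ i ∈ blockSet blk l, ∑ j ∈ blockSet blk l,
          if i = j then 0 else fderiv ℝ (gradient (f i)) xstar (gradient (f j) xstar))
        + (((n : ℝ) - 1) / ((N : ℝ) - 1)) •
            ∑ p ∈ Finset.univ.offDiag, ∑ i ∈ blockSet blk p.1, ∑ j ∈ blockSet blk p.2,
              fderiv ℝ (gradient (f i)) xstar (gradient (f j) xstar)‖
      ≤ (((N : ℝ) - (n : ℝ)) / ((N : ℝ) - 1)) * (N : ℝ) * (b : ℝ) * ((b : ℝ) - 1) * L * G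
        + (((n : ℝ) - 1) / ((N : ℝ) - 1)) * (N : ℝ) * (b : ℝ) * L * G := by
  set ρ : ℝ := ((n : ℝ) - 1) / ((N : ℝ) - 1) with hρ
  have hN1 : (0 : ℝ) < N - 1 := by
    have : (2 : ℝ) ≤ N := by exact_mod_cast hN
    linarith
  have hn1' : (1 : ℝ) ≤ n := by exact_mod_cast hn1
  have hnN' : (n : ℝ) ≤ N := by exact_mod_cast hnN
  have hρ0 : 0 ≤ ρ := div_nonneg (by linarith) hN1.le
  have hρ1 : ρ ≤ 1 := (div_le_one hN1).2 (by linarith)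
  have hrow : ∀ i, ∑ j, fderiv ℝ (gradient (f i)) xstar (gradient (f j) xstar) = 0 := fun i => by
    rw [← map_sum, hstat, map_zero]
  have hHg : ∀ i j, ‖fderiv ℝ (gradient (f i)) xstar (gradient (f j) xstar)‖ ≤ L * G :=
    fun i j => (ContinuousLinearMap.le_of_opNorm_le _ (hL i) _).trans
      (mul_le_mul_of_nonneg_left (hG j) ((norm_nonneg _).trans (hL i)))
  refine (norm_intraBlockSum_add_smul_crossBlockSum_le blk hrow hblk hHg hρ0 hρ1).trans_eq ?_
  rw [Fintype.card_fin, Fintype.card_fin, hρ]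
  field_simp
  push_cast
  ring

/-- **Centered bilinear block-sum bound (the ρ-trick bound of J₃).**
If `∑_j ∇f_j(x*) = 0`, `‖H_i(x*)‖ ≤ L` and `‖∇f_j(x*)‖ ≤ G`, then
`‖∑_l ∑_{i≠j∈B_l} H_i(x*)∇f_j(x*) + ((n−1)/(N−1))·∑_{l≠l'} ∑_{i∈B_l,j∈B_{l'}} H_i(x*)∇f_j(x*)‖
  ≤ ((N−n)/(N−1))·N·b·(b−1)·L·G + ((n−1)/(N−1))·N·b·L·G`. -/
theorem rho_trick_block_sum_bound {d N n b : ℕ}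
    (hN : 2 ≤ N) (hn1 : 1 ≤ n) (hnN : n ≤ N)
    (blk : Fin (N * b) → Fin N)
    (hblk : ∀ l, (blockSet blk l).card = b)
    (f : Fin (N * b) → Eu d → ℝ) (L G : ℝ)
    (hf : ∀ i, ContDiff ℝ 2 (f i))
    (xstar : Eu d)
    (hstat : ∑ j, gradient (f j) xstar = 0)
    (hL : ∀ i, ‖fderiv ℝ (gradient (f i)) xstar‖ ≤ L)
    (hG : ∀ j, ‖gradient (f j) xstar‖ ≤ G) :
    ‖(∑ l, ∑ i ∈ blockSet blk l, ∑ j ∈ blockSet blk l,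
          if i = j then 0 else fderiv ℝ (gradient (f i)) xstar (gradient (f j) xstar))
        + (((n : ℝ) - 1) / ((N : ℝ) - 1)) •
            ∑ p ∈ Finset.univ.offDiag, ∑ i ∈ blockSet blk p.1, ∑ j ∈ blockSet blk p.2,
              fderiv ℝ (gradient (f i)) xstar (gradient (f j) xstar)‖
      ≤ (((N : ℝ) - (n : ℝ)) / ((N : ℝ) - 1)) * (N : ℝ) * (b : ℝ) * ((b : ℝ) - 1) * L * G
        + (((n : ℝ) - 1) / ((N : ℝ) - 1)) * (N : ℝ) * (b : ℝ) * L * G :=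
  rho_trick_block_sum_bound_general hN hn1 hnN blk hblk f L G xstar hstat hL hG

end
end
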